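/- arXiv:2112.05263 — 2 statements merged into one kernel-verified Lean document; each statement's English description precedes it below -/
import Mathlib

section
/- For the three-hop line network with all edge capacities equal to C, HD optimal value t*_HD = (C - 4λ_min)/8, and FD optimal value t*_FD = (C - 2λ_min)/5 if λ_min ≤ C/7 and (C - 3λ_min)/4 otherwise, where each t* is computed as min_k (1 - λ_min G_{k,:} C^{-1} F 1)/(G_{k,:} C^{-1} h̃) with h̃ = (1,3,2,3,3)^T, F^T = [[1,0,0,0,0],[0,1,1,0,0],[0,1,0,1,1]], G_HD = [[1,1,0,0,0],[0,1,1,1,0],[0,0,0,1,1]], G_FD = [[1,1,0,0,0],[0,0,1,1,0],[0,0,0,0,1]]. -/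
/-!
With all capacities equal, `C⁻¹ = (1/C)·I` and the factor `1/C` cancels from every ratio, leaving
`(C - λ (G F 1)_k) / (G h̃)_k`, so `t*` is the least of three affine functions of `λ`. In HD the
middle row always attains it; in FD the first two rows, `(C - 3λ)/4` and `(C - 2λ)/5`, cross at
`λ = C/7`.
-/

open Finset

/-- Routing matrix of the three-hop line network (edges × UEs). -/
def lineF : Matrix (Fin 5) (Fin 3) ℝ :=
  !![1,0,0; 0,1,1; 0,1,0; 0,0,1; 0,0,1]

/-- HD scheduling matrix. -/
def lineGHD : Matrix (Fin 3) (Fin 5) ℝ :=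
  !![1,1,0,0,0; 0,1,1,1,0; 0,0,0,1,1]

/-- FD scheduling matrix. -/
def lineGFD : Matrix (Fin 3) (Fin 5) ℝ :=
  !![1,1,0,0,0; 0,0,1,1,0; 0,0,0,0,1]

/-- Vector `h̃` of worst-case hop counts per edge. -/
def lineH : Fin 5 → ℝ := ![1,3,2,3,3]

open Matrix

theorem equalCapacity_ratio_eq {κ ι μ : Type*} [Fintype ι] [Fintype μ]
    (G : Matrix κ ι ℝ) (F : Matrix ι μ ℝ) (h : ι → ℝ) {C : ℝ} (hC : C ≠ 0) (lam : ℝ) (k : κ) :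
    (1 - lam * ∑ v, G k v * (∑ m, F v m) / C) / (∑ v, G k v * h v / C) =
      (C - lam * (G *ᵥ (F *ᵥ 1)) k) / (G *ᵥ h) k := by
  simp only [← Finset.sum_div, mulVec, dotProduct, Pi.one_apply, mul_one]
  field_simp

theorem lineGHD_mulVec_lineF_one : lineGHD *ᵥ (lineF *ᵥ 1) = ![3, 4, 2] := by
  ext k; fin_cases k <;> norm_num [lineGHD, lineF, mulVec, dotProduct, Fin.sum_univ_succ]

theorem lineGHD_mulVec_lineH : lineGHD *ᵥ lineH = ![4, 8, 6] := by
  ext k; fin_cases k <;> norm_num [lineGHD, lineH, mulVec, dotProduct, Fin.sum_univ_succ]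

theorem lineGFD_mulVec_lineF_one : lineGFD *ᵥ (lineF *ᵥ 1) = ![3, 2, 1] := by
  ext k; fin_cases k <;> norm_num [lineGFD, lineF, mulVec, dotProduct, Fin.sum_univ_succ]

theorem lineGFD_mulVec_lineH : lineGFD *ᵥ lineH = ![4, 5, 3] := by
  ext k; fin_cases k <;> norm_num [lineGFD, lineH, mulVec, dotProduct, Fin.sum_univ_succ]

theorem Finset.inf'_univ_fin_three {α : Type*} [LinearOrder α] (f : Fin 3 → α) :
    univ.inf' univ_nonempty f = min (f 0) (min (f 1) (f 2)) := by
  simp [Fin.univ_succ]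

/-- For the three-hop line network with all edge capacities `C`,
`t*_HD = (C - 4λ_min)/8` and `t*_FD = (C - 2λ_min)/5` if `λ_min ≤ C/7`,
`(C - 3λ_min)/4` otherwise, where each `t*` is
`min_k (1 - λ_min G_k C⁻¹ F 1)/(G_k C⁻¹ h̃)`. -/
theorem three_hop_line_t_star
    (C lam : ℝ) (hC : 0 < C) (hlam0 : 0 ≤ lam) (hlam : lam < C / 4) :
    (Finset.univ.inf' Finset.univ_nonempty
      (fun k : Fin 3 =>
        (1 - lam * ∑ v, lineGHD k v * (∑ m, lineF v m) / C) /
          (∑ v, lineGHD k v * lineH v / C)) = (C - 4 * lam) / 8) ∧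
    (Finset.univ.inf' Finset.univ_nonempty
      (fun k : Fin 3 =>
        (1 - lam * ∑ v, lineGFD k v * (∑ m, lineF v m) / C) /
          (∑ v, lineGFD k v * lineH v / C)) =
        if lam ≤ C / 7 then (C - 2 * lam) / 5 else (C - 3 * lam) / 4) := by
  simp only [inf'_univ_fin_three, equalCapacity_ratio_eq _ _ _ hC.ne', lineGHD_mulVec_lineF_one,
    lineGHD_mulVec_lineH, lineGFD_mulVec_lineF_one, lineGFD_mulVec_lineH, cons_val_zero,
    cons_val_one, cons_val_two, head_cons, tail_cons]
  refine ⟨?_, ?_⟩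
  · rw [min_eq_right (min_le_of_left_le (by linarith)), min_eq_left (by linarith)]
    ring
  · split_ifs with hsmall
    · rw [min_eq_right (min_le_of_left_le (by linarith)), min_eq_left (by linarith)]
      ring
    · rw [min_eq_left (le_min (by linarith) (by linarith))]
      ring
end

section
/- In the optimal solution of the delay-minimization LP, the arrival-rate vector λ* = λ_min·1 is not unique: for any non-bottleneck UE m (i.e., with c_v μ*_v - λ_min(F1)_v > t* h_m for all edges v on its route), any λ_m with λ_min < λ_m < min over edges v on route m of (c_v μ*_v - t* h̃_v)/((F1)_v) keeps all constraints satisfied with the same optimal t*, hence is also optimal. -/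
/-!
Raising the rate of UE `m₀` changes the load `∑ m', F v m' λ_{m'}` only on the edges of its
route. Off the route the old constraint is untouched. On an edge `v` of the route every rate is at
most `λ_{m₀}`, so the load is at most `λ_{m₀} (F1)_v < c_v μ*_v - t* h̃_v`, and `h_m ≤ h̃_v` for
every UE `m` routed through `v`.
-/

open Finset Function

section UpdateConst

variable {ι α : Type*} [DecidableEq ι] [Preorder α] {a b : α}

lemma le_update_const (hab : a ≤ b) (i j : ι) : a ≤ update (fun _ => a) i b j := by
  rcases eq_or_ne j i with rfl | hj
  · simpa using hab
  · simp [hj]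

lemma update_const_le (hab : a ≤ b) (i j : ι) : update (fun _ => a) i b j ≤ b := by
  rcases eq_or_ne j i with rfl | hj
  · simp
  · simpa [hj] using hab

end UpdateConst

lemma sum_mul_update_of_eq_zero {ι R : Type*} [Fintype ι] [DecidableEq ι]
    [NonUnitalNonAssocSemiring R] (w f : ι → R) {i : ι} (hi : w i = 0) (x : R) :
    ∑ j, w j * update f i x j = ∑ j, w j * f j := by
  refine sum_congr rfl fun j _ => ?_
  rcases eq_or_ne j i with rfl | hj
  · simp [hi]
  · rw [update_of_ne hj]

lemma sum_mul_le_sum_mul_of_le {ι R : Type*} [Fintype ι] [Semiring R] [PartialOrder R]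
    [IsOrderedRing R] {w f : ι → R} {b : R} (hw : ∀ j, 0 ≤ w j) (hf : ∀ j, f j ≤ b) :
    ∑ j, w j * f j ≤ (∑ j, w j) * b := by
  rw [sum_mul]
  exact sum_le_sum fun j _ => mul_le_mul_of_nonneg_left (hf j) (hw j)

theorem arrival_rate_not_unique_general
    {E M : Type*} [Fintype E] [Fintype M] [DecidableEq M]
    (F : E → M → ℝ) (hF : ∀ v m, F v m = 0 ∨ F v m = 1)
    (c : E → ℝ)
    (h : M → ℝ)
    (htilde : E → ℝ) (hht : ∀ v m, F v m = 1 → h m ≤ htilde v)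
    (lamMin tstar : ℝ) (htstar : 0 ≤ tstar)
    (μ : E → ℝ)
    (hfeas : ∀ m, ∀ v, F v m = 1 →
      c v * μ v - (∑ m', F v m' * lamMin) ≥ tstar * h m)
    (m₀ : M)
    (lam₀ : ℝ) (hlo : lamMin < lam₀)
    (hhi : ∀ v, F v m₀ = 1 →
      lam₀ < (c v * μ v - tstar * htilde v) / (∑ m', F v m')) :
    (∀ m, lamMin ≤ Function.update (fun _ : M => lamMin) m₀ lam₀ m) ∧
    (∀ m, ∀ v, F v m = 1 →
      c v * μ v - (∑ m', F v m' * Function.update (fun _ : M => lamMin) m₀ lam₀ m')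
        ≥ tstar * h m) := by
  refine ⟨le_update_const hlo.le m₀, fun m v hvm => ?_⟩
  have hF_nonneg : ∀ m', 0 ≤ F v m' := fun m' => by rcases hF v m' with h0 | h1 <;> simp [*]
  rcases hF v m₀ with hoff | hon
  · rw [sum_mul_update_of_eq_zero _ _ hoff]
    exact hfeas m v hvm
  · have hload := sum_mul_le_sum_mul_of_le hF_nonneg (update_const_le hlo.le m₀)
    have hdeg : 0 < ∑ m', F v m' :=
      sum_pos' (fun m' _ => hF_nonneg m') ⟨m₀, mem_univ _, hon ▸ one_pos⟩
    have hcap := (lt_div_iff₀ hdeg).mp (hhi v hon)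
    have hdelay := mul_le_mul_of_nonneg_left (hht v m hvm) htstar
    linarith

/-- Non-uniqueness of the optimal arrival-rate vector: if `(t*, λ_min·1, μ*)` is
feasible and UE `m₀` is non-bottleneck (strict slack on every edge of its route),
then any `λ_{m₀}` with
`λ_min < λ_{m₀} < min_{v ∈ R(m₀)} (c_v μ*_v - t* h̃_v)/((F1)_v)` keeps all
constraints satisfied with the same `t*`, hence is also optimal. -/
theorem arrival_rate_not_unique
    {E M K : Type*} [Fintype E] [Fintype M] [Fintype K] [DecidableEq M]
    (F : E → M → ℝ) (hF : ∀ v m, F v m = 0 ∨ F v m = 1)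
    (G : K → E → ℝ) (hG : ∀ k v, 0 ≤ G k v)
    (c : E → ℝ) (hc : ∀ v, 0 < c v)
    (h : M → ℝ) (hh : ∀ m, 1 ≤ h m)
    (htilde : E → ℝ) (hht : ∀ v m, F v m = 1 → h m ≤ htilde v)
    (lamMin tstar : ℝ) (hlamMin : 0 < lamMin) (htstar : 0 ≤ tstar)
    (μ : E → ℝ) (hμ : ∀ v, 0 ≤ μ v ∧ μ v ≤ 1)
    (hsched : ∀ k, ∑ v, G k v * μ v ≤ 1)
    (hfeas : ∀ m, ∀ v, F v m = 1 →
      c v * μ v - (∑ m', F v m' * lamMin) ≥ tstar * h m)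
    (m₀ : M)
    (hslack : ∀ v, F v m₀ = 1 →
      c v * μ v - lamMin * (∑ m', F v m') > tstar * h m₀)
    (lam₀ : ℝ) (hlo : lamMin < lam₀)
    (hhi : ∀ v, F v m₀ = 1 →
      lam₀ < (c v * μ v - tstar * htilde v) / (∑ m', F v m')) :
    (∀ m, lamMin ≤ Function.update (fun _ : M => lamMin) m₀ lam₀ m) ∧
    (∀ m, ∀ v, F v m = 1 →
      c v * μ v - (∑ m', F v m' * Function.update (fun _ : M => lamMin) m₀ lam₀ m')
        ≥ tstar * h m) :=
  arrival_rate_not_unique_general F hF c h htilde hht lamMin tstar htstar μ hfeas m₀ lam₀ hlo hhi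
end
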